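/- Let X be a nonnegative random variable with cumulative distribution function F and finite mean E[X] = ∫₀^∞ (1 − F(x)) dx. Then the sum of the cumulative residual entropy and the cumulative entropy of X equals 𝓔(X) + 𝓒𝓔(X) = Σ_{n=1}^∞ (μ_{n+1:n+1} − μ_{1:n+1})/(n(n+1)), where both sides are equal as values in [0, ∞]. -/

import Mathlib

/-!
For `p ∈ (-1, 1]` the power series of the logarithm gives
`-(1 - p) log (1 - p) = ∑ (p - p ^ (n + 2)) / ((n + 1) (n + 2))`.
Adding the instances `p = F x` and `p = 1 - F x` expresses the sum of the two entropy integrands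
as a series with nonnegative terms `(1 - F ^ (n + 2) - (1 - F) ^ (n + 2)) / ((n + 1) (n + 2))`,
which may be integrated term by term. Each integral splits into
`μ_{n+2:n+2} - μ_{1:n+2}` because `(1 - F) ^ (n + 2) ≤ 1 - F` and the mean is finite.
-/

open MeasureTheory ProbabilityTheory Real
open scoped ENNReal

theorem pow_add_one_sub_pow_le_one {R : Type*} [Ring R] [PartialOrder R] [IsOrderedRing R]
    {q : R} (hq₀ : 0 ≤ q) (hq₁ : q ≤ 1) {n : ℕ} (hn : n ≠ 0) : q ^ n + (1 - q) ^ n ≤ 1 := by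
  simpa using pow_add_pow_le hq₀ (sub_nonneg.2 hq₁) hn

theorem hasSum_one_div_add_one_mul_add_two :
    HasSum (fun n : ℕ => 1 / (((n : ℝ) + 1) * ((n : ℝ) + 2))) 1 := by
  have partial_sum (N : ℕ) :
      ∑ n ∈ Finset.range N, 1 / (((n : ℝ) + 1) * ((n : ℝ) + 2)) = 1 - 1 / ((N : ℝ) + 1) := by
    induction N with
    | zero => simp
    | succ N ih =>
      rw [Finset.sum_range_succ, ih]
      push_cast
      field_simp
      ring
  rw [hasSum_iff_tendsto_nat_of_nonneg (fun n => by positivity), funext partial_sum]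
  simpa using tendsto_const_nhds.sub (tendsto_one_div_add_atTop_nhds_zero_nat (𝕜 := ℝ))

namespace Real

theorem hasSum_pow_add_two_div_mul {p : ℝ} (hp : |p| < 1) :
    HasSum (fun n : ℕ => p ^ (n + 2) / (((n : ℝ) + 1) * ((n : ℝ) + 2)))
      ((1 - p) * log (1 - p) + p) := by
  have hlog := hasSum_pow_div_log_of_abs_lt_one hp
  have h₁ : HasSum (fun n : ℕ => p ^ (n + 2) / ((n : ℝ) + 1)) (p * -log (1 - p)) :=
    (hlog.mul_left p).congr_fun fun n => by ring
  have h₂ : HasSum (fun n : ℕ => p ^ (n + 2) / ((n : ℝ) + 2)) (-log (1 - p) - p) := by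
    have := ((hasSum_nat_add_iff' 1).2 hlog).congr_fun fun n : ℕ =>
      show p ^ (n + 2) / ((n : ℝ) + 2) = p ^ (n + 1 + 1) / (((n + 1 : ℕ) : ℝ) + 1) by
        push_cast; ring_nf
    simpa using this
  have h := (h₁.sub h₂).congr_fun fun n : ℕ =>
    show p ^ (n + 2) / (((n : ℝ) + 1) * ((n : ℝ) + 2))
      = p ^ (n + 2) / ((n : ℝ) + 1) - p ^ (n + 2) / ((n : ℝ) + 2) by
      field_simp; ring
  rwa [show p * -log (1 - p) - (-log (1 - p) - p) = (1 - p) * log (1 - p) + p by ring] at h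

theorem hasSum_sub_pow_div_mul {p : ℝ} (hp₀ : -1 < p) (hp₁ : p ≤ 1) :
    HasSum (fun n : ℕ => (p - p ^ (n + 2)) / (((n : ℝ) + 1) * ((n : ℝ) + 2)))
      (negMulLog (1 - p)) := by
  rcases hp₁.eq_or_lt with rfl | hp₁
  · simp [hasSum_zero]
  have h := (hasSum_one_div_add_one_mul_add_two.mul_left p).sub
    (hasSum_pow_add_two_div_mul (abs_lt.2 ⟨hp₀, hp₁⟩))
  rw [show p * 1 - ((1 - p) * log (1 - p) + p) = negMulLog (1 - p) by
    rw [negMulLog]; ring] at h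
  exact h.congr_fun fun n => by ring

theorem hasSum_one_sub_pow_sub_pow_div_mul {q : ℝ} (hq₀ : 0 ≤ q) (hq₁ : q ≤ 1) :
    HasSum (fun n : ℕ => (1 - q ^ (n + 2) - (1 - q) ^ (n + 2)) / (((n : ℝ) + 1) * ((n : ℝ) + 2)))
      (negMulLog (1 - q) + negMulLog q) := by
  have h := (hasSum_sub_pow_div_mul (by linarith) hq₁).add
    (hasSum_sub_pow_div_mul (p := 1 - q) (by linarith) (by linarith))
  rw [sub_sub_cancel] at h
  exact h.congr_fun fun n => by ring

end Real

theorem ENNReal.ofReal_negMulLog_one_sub_add_ofReal_negMulLog {q : ℝ} (hq₀ : 0 ≤ q) (hq₁ : q ≤ 1) :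
    ENNReal.ofReal (negMulLog (1 - q)) + ENNReal.ofReal (negMulLog q)
      = ∑' n : ℕ, ENNReal.ofReal (1 - q ^ (n + 2) - (1 - q) ^ (n + 2))
          / (((n : ℝ≥0∞) + 1) * ((n : ℝ≥0∞) + 2)) := by
  have h := hasSum_one_sub_pow_sub_pow_div_mul hq₀ hq₁
  have hterm (n : ℕ) :
      0 ≤ (1 - q ^ (n + 2) - (1 - q) ^ (n + 2)) / (((n : ℝ) + 1) * ((n : ℝ) + 2)) := by
    have := pow_add_one_sub_pow_le_one hq₀ hq₁ (n := n + 2) (by omega)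
    exact div_nonneg (by linarith) (by positivity)
  rw [← ENNReal.ofReal_add (negMulLog_nonneg (by linarith) (by linarith))
    (negMulLog_nonneg hq₀ hq₁), ← h.tsum_eq, ENNReal.ofReal_tsum_of_nonneg hterm h.summable]
  refine tsum_congr fun n => ?_
  rw [ENNReal.ofReal_div_of_pos (by positivity), ENNReal.ofReal_mul (by positivity)]
  norm_cast

theorem MeasureTheory.lintegral_ofReal_sub {α : Type*} [MeasurableSpace α] {ν : Measure α}
    {f g : α → ℝ} (hg : AEMeasurable g ν) (hg₀ : 0 ≤ᵐ[ν] g)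
    (hg_fin : ∫⁻ x, ENNReal.ofReal (g x) ∂ν ≠ ∞) (hgf : g ≤ᵐ[ν] f) :
    ∫⁻ x, ENNReal.ofReal (f x - g x) ∂ν
      = ∫⁻ x, ENNReal.ofReal (f x) ∂ν - ∫⁻ x, ENNReal.ofReal (g x) ∂ν := by
  rw [← lintegral_sub' hg.ennreal_ofReal hg_fin (hgf.mono fun x hx => ENNReal.ofReal_le_ofReal hx)]
  exact lintegral_congr_ae (hg₀.mono fun x hx => ENNReal.ofReal_sub _ hx)

theorem MeasureTheory.lintegral_negMulLog_one_sub_add_lintegral_negMulLog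
    {α : Type*} [MeasurableSpace α] {ν : Measure α} {F : α → ℝ} (hF : AEMeasurable F ν)
    (hF₀ : ∀ x, 0 ≤ F x) (hF₁ : ∀ x, F x ≤ 1) (hmean : ∫⁻ x, ENNReal.ofReal (1 - F x) ∂ν ≠ ∞) :
    ∫⁻ x, ENNReal.ofReal (negMulLog (1 - F x)) ∂ν + ∫⁻ x, ENNReal.ofReal (negMulLog (F x)) ∂ν
      = ∑' n : ℕ, (∫⁻ x, ENNReal.ofReal (1 - F x ^ (n + 2)) ∂ν
          - ∫⁻ x, ENNReal.ofReal ((1 - F x) ^ (n + 2)) ∂ν)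
          / (((n : ℝ≥0∞) + 1) * ((n : ℝ≥0∞) + 2)) := by
  rw [← lintegral_add_left' (by fun_prop),
    lintegral_congr fun x => ENNReal.ofReal_negMulLog_one_sub_add_ofReal_negMulLog (hF₀ x) (hF₁ x),
    lintegral_tsum fun n => by fun_prop]
  refine tsum_congr fun n => ?_
  simp_rw [div_eq_mul_inv]
  rw [lintegral_mul_const' _ _ (by simp)]
  congr 1
  refine lintegral_ofReal_sub (by fun_prop) (ae_of_all _ fun x => ?_) ?_ (ae_of_all _ fun x => ?_)
  · exact pow_nonneg (sub_nonneg.2 (hF₁ x)) _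
  · refine ne_top_of_le_ne_top hmean (lintegral_mono fun x => ENNReal.ofReal_le_ofReal ?_)
    exact pow_le_of_le_one (sub_nonneg.2 (hF₁ x)) (by linarith [hF₀ x]) (by omega)
  · linarith [pow_add_one_sub_pow_le_one (hF₀ x) (hF₁ x) (n := n + 2) (by omega)]

theorem cre_add_ce_eq_tsum_order_stats_diff_general
    (μ : Measure ℝ)
    (hmean : ∫⁻ x in Set.Ioi (0 : ℝ), ENNReal.ofReal (1 - cdf μ x) ≠ ⊤) :
    (∫⁻ x in Set.Ioi (0 : ℝ),
        ENNReal.ofReal (-((1 - cdf μ x) * Real.log (1 - cdf μ x))))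
      + ∫⁻ x in Set.Ioi (0 : ℝ),
          ENNReal.ofReal (-(cdf μ x * Real.log (cdf μ x)))
    = ∑' n : ℕ,
        ((∫⁻ x in Set.Ioi (0 : ℝ), ENNReal.ofReal (1 - (cdf μ x) ^ (n + 2)))
            - ∫⁻ x in Set.Ioi (0 : ℝ), ENNReal.ofReal ((1 - cdf μ x) ^ (n + 2)))
          / (((n : ℝ≥0∞) + 1) * ((n : ℝ≥0∞) + 2)) := by
  simpa only [negMulLog, neg_mul] using lintegral_negMulLog_one_sub_add_lintegral_negMulLog
    (monotone_cdf μ).measurable.aemeasurable (cdf_nonneg μ) (cdf_le_one μ) hmean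

/-- For a nonnegative random variable with cdf `F = cdf μ` and finite mean
`E[X] = ∫₀^∞ (1 - F x) dx`, the sum of the cumulative residual entropy
`𝓔(X) = ∫₀^∞ -(1 - F x) log (1 - F x) dx` and the cumulative entropy
`𝓒𝓔(X) = ∫₀^∞ -(F x) log (F x) dx` equals
`∑_{n=1}^∞ (μ_{n+1:n+1} - μ_{1:n+1}) / (n (n+1))` as values in `[0, ∞]`, where
`μ_{m:m} = ∫₀^∞ (1 - (F x)^m) dx` and `μ_{1:m} = ∫₀^∞ (1 - F x)^m dx`. -/
theorem cre_add_ce_eq_tsum_order_stats_diff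
    (μ : Measure ℝ) [IsProbabilityMeasure μ] (hnonneg : μ (Set.Iio 0) = 0)
    (hmean : ∫⁻ x in Set.Ioi (0 : ℝ), ENNReal.ofReal (1 - cdf μ x) ≠ ⊤) :
    (∫⁻ x in Set.Ioi (0 : ℝ),
        ENNReal.ofReal (-((1 - cdf μ x) * Real.log (1 - cdf μ x))))
      + ∫⁻ x in Set.Ioi (0 : ℝ),
          ENNReal.ofReal (-(cdf μ x * Real.log (cdf μ x)))
    = ∑' n : ℕ,
        ((∫⁻ x in Set.Ioi (0 : ℝ), ENNReal.ofReal (1 - (cdf μ x) ^ (n + 2)))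
            - ∫⁻ x in Set.Ioi (0 : ℝ), ENNReal.ofReal ((1 - cdf μ x) ^ (n + 2)))
          / (((n : ℝ≥0∞) + 1) * ((n : ℝ≥0∞) + 2)) :=
  cre_add_ce_eq_tsum_order_stats_diff_general μ hmean
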